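/- The six gamma matrices satisfy the Clifford algebra anticommutation relations of signature (4,2): for all indices m, n in {x, y, z, t, q, p}, Γ_m Γ_n + Γ_n Γ_m = 2 g(m,n) · I₄. -/

import Mathlib

open Quaternion Matrix

/-- The split quaternions, with K = i, L = j, KL = k. -/
notation "ℍ'" => QuaternionAlgebra ℝ (-1) 0 1

/-- A = ℍ' ⊗_ℝ ℂ, realized as the quaternion algebra over ℂ with i² = −1, j² = 1. -/
abbrev SplitQC := QuaternionAlgebra ℂ (-1) 0 1

namespace SplitQC
/-- K, the split-quaternion unit with K² = −1 -/
def K : SplitQC := ⟨0, 1, 0, 0⟩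
/-- L, the split-quaternion unit with L² = 1 -/
def L : SplitQC := ⟨0, 0, 1, 0⟩
/-- KL, with (KL)² = 1 -/
def KL : SplitQC := ⟨0, 0, 0, 1⟩
/-- ℓ = 1 ⊗ i, the complex unit -/
def ll : SplitQC := ⟨Complex.I, 0, 0, 0⟩
end SplitQC

open SplitQC

/-- Index set {x, y, z, t, q, p} for the gamma matrices. -/
inductive Idx | x | y | z | t | q | p
deriving DecidableEq

/-- The gamma matrices generating Cl(4,2). -/
def Γ : Idx → Matrix (Fin 4) (Fin 4) SplitQC
| Idx.x => !![0,0,0,1; 0,0,1,0; 0,1,0,0; 1,0,0,0]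
| Idx.y => !![0,0,0,-ll; 0,0,ll,0; 0,-ll,0,0; ll,0,0,0]
| Idx.z => !![0,0,1,0; 0,0,0,-1; 1,0,0,0; 0,-1,0,0]
| Idx.t => !![0,0,L,0; 0,0,0,L; -L,0,0,0; 0,-L,0,0]
| Idx.q => !![0,0,K,0; 0,0,0,K; -K,0,0,0; 0,-K,0,0]
| Idx.p => !![0,0,KL,0; 0,0,0,KL; -KL,0,0,0; 0,-KL,0,0]

/-- The metric of signature (4,2). -/
def g : Idx → Idx → ℝ
| Idx.x, Idx.x => 1 | Idx.y, Idx.y => 1 | Idx.z, Idx.z => 1 | Idx.q, Idx.q => 1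
| Idx.t, Idx.t => -1 | Idx.p, Idx.p => -1
| _, _ => 0

/-! Each `Γ m` is block off-diagonal, `[[0, A_m], [B_m, 0]]` with 2 × 2 blocks, so the
anticommutator of `Γ m` and `Γ n` is block diagonal with blocks `A_m B_n + A_n B_m` and
`B_m A_n + B_n A_m`. For `m ∈ {x, y, z}` both blocks are the Pauli matrix `σ_m` (with `ℓ` as the
imaginary unit), and Pauli matrices anticommute and square to `1`. For `m ∈ {t, q, p}` the blocks
are `±u • 1` with `u = L, K, KL`; these units anticommute, and the opposite signs of the two blocks
give the diagonal entries `-2u² = 2 g(m, m)`. Mixed anticommutators vanish because the entries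
`0, ±1, ±ℓ` of the Pauli matrices are central. -/

namespace SplitQC

@[simp] lemma K_mul_K : K * K = -1 := by ext <;> simp [K]
@[simp] lemma L_mul_L : L * L = 1 := by ext <;> simp [L]
@[simp] lemma KL_mul_KL : KL * KL = 1 := by ext <;> simp [KL]
@[simp] lemma ll_mul_ll : ll * ll = -1 := by ext <;> simp [ll]
@[simp] lemma K_mul_L : K * L = KL := by ext <;> simp [K, L, KL]
@[simp] lemma L_mul_K : L * K = -KL := by ext <;> simp [K, L, KL]
@[simp] lemma K_mul_KL : K * KL = -L := by ext <;> simp [K, L, KL]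
@[simp] lemma KL_mul_K : KL * K = L := by ext <;> simp [K, L, KL]
@[simp] lemma L_mul_KL : L * KL = -K := by ext <;> simp [K, L, KL]
@[simp] lemma KL_mul_L : KL * L = K := by ext <;> simp [K, L, KL]

lemma commute_ll (a : SplitQC) : Commute ll a :=
  QuaternionAlgebra.coe_commute Complex.I a

end SplitQC

theorem Matrix.zero_fin_two {α : Type*} [Zero α] :
    (0 : Matrix (Fin 2) (Fin 2) α) = !![0, 0; 0, 0] :=
  eta_fin_two 0

theorem Matrix.fromBlocks_zero_anticomm {n R : Type*} [Fintype n] [NonUnitalNonAssocSemiring R]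
    (A B C D : Matrix n n R) :
    fromBlocks 0 A B 0 * fromBlocks 0 C D 0 + fromBlocks 0 C D 0 * fromBlocks 0 A B 0 =
      fromBlocks (A * D + C * B) 0 0 (B * C + D * A) := by
  simp [fromBlocks_multiply, fromBlocks_add]

def upperBlock : Idx → Matrix (Fin 2) (Fin 2) SplitQC
  | .x => !![0, 1; 1, 0]
  | .y => !![0, -ll; ll, 0]
  | .z => !![1, 0; 0, -1]
  | .t => !![L, 0; 0, L]
  | .q => !![K, 0; 0, K]
  | .p => !![KL, 0; 0, KL]

def lowerBlock : Idx → Matrix (Fin 2) (Fin 2) SplitQC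
  | .x => !![0, 1; 1, 0]
  | .y => !![0, -ll; ll, 0]
  | .z => !![1, 0; 0, -1]
  | .t => !![-L, 0; 0, -L]
  | .q => !![-K, 0; 0, -K]
  | .p => !![-KL, 0; 0, -KL]

theorem Γ_eq_reindex_fromBlocks (m : Idx) :
    Γ m = reindexAlgEquiv ℝ SplitQC finSumFinEquiv
      (fromBlocks 0 (upperBlock m) (lowerBlock m) 0) := by
  ext i j : 1
  cases m <;> fin_cases i <;> fin_cases j <;> rfl

theorem upperBlock_lowerBlock_anticomm (m n : Idx) :
    upperBlock m * lowerBlock n + upperBlock n * lowerBlock m = (2 * g m n) • 1 := by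
  cases m <;> cases n <;>
    simp [upperBlock, lowerBlock, g, one_fin_two, zero_fin_two, two_smul, (commute_ll _).eq]

theorem lowerBlock_upperBlock_anticomm (m n : Idx) :
    lowerBlock m * upperBlock n + lowerBlock n * upperBlock m = (2 * g m n) • 1 := by
  cases m <;> cases n <;>
    simp [upperBlock, lowerBlock, g, one_fin_two, zero_fin_two, two_smul, (commute_ll _).eq]

/-- The gamma matrices satisfy the Clifford relations of signature (4,2):
Γ_m Γ_n + Γ_n Γ_m = 2 g(m,n) I₄. -/
theorem gamma_clifford_relations (m n : Idx) :
    Γ m * Γ n + Γ n * Γ m = (2 * g m n) • (1 : Matrix (Fin 4) (Fin 4) SplitQC) := by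
  set φ := reindexAlgEquiv ℝ SplitQC (finSumFinEquiv (m := 2) (n := 2))
  set P : Idx → Matrix (Fin 2 ⊕ Fin 2) (Fin 2 ⊕ Fin 2) SplitQC :=
    fun k ↦ fromBlocks 0 (upperBlock k) (lowerBlock k) 0
  calc Γ m * Γ n + Γ n * Γ m = φ (P m * P n + P n * P m) := by
        simp only [Γ_eq_reindex_fromBlocks, P, φ, map_add, map_mul]
    _ = φ ((2 * g m n) • fromBlocks 1 0 0 1) := by
        rw [fromBlocks_zero_anticomm, upperBlock_lowerBlock_anticomm,
          lowerBlock_upperBlock_anticomm, fromBlocks_smul, smul_zero]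
    _ = (2 * g m n) • 1 := by
        rw [fromBlocks_one, map_smul, map_one]
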